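/- arXiv:2102.06333 — 2 statements merged into one kernel-verified Lean document; each statement's English description precedes it below -/
import Mathlib

section
/- If g is μ-strongly convex-concave (μ > 0), then the proximal operator prox_{(1/θ)g}(z') := argmin_x max_y [g(x,y) + (θ/2)‖x-x'‖² - (θ/2)‖y-y'‖²] is a contraction with factor 1 - μ/(θ+μ): for all z₁, z₂, ‖prox_{(1/θ)g}(z₁) - prox_{(1/θ)g}(z₂)‖ ≤ (1 - μ/(θ+μ))‖z₁ - z₂‖. -/
/-!
The proximal terms make the objective `(μ + θ)`-strongly convex-concave, so its saddle point
`P z` obeys a quadratic growth bound in both variables. Adding the bound for `P z₁` tested at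
`P z₂` to the bound for `P z₂` tested at `P z₁`, the values of `g` cancel and the proximal terms
collapse, by the four-point identity, to `(μ + θ)‖P z₁ - P z₂‖² ≤ θ⟪P z₁ - P z₂, z₁ - z₂⟫` in the
`ℓ²` product `E × F`. Cauchy–Schwarz then gives the factor `θ / (θ + μ) = 1 - μ / (θ + μ)`.
-/

open Set Filter
open scoped InnerProductSpace

section StrongConvexity

variable {E : Type*} [NormedAddCommGroup E] [InnerProductSpace ℝ E] {s : Set E} {f g : E → ℝ}
  {m n : ℝ} {u v : E}

lemma StrongConvexOn.add (hf : StrongConvexOn s m f) (hg : StrongConvexOn s n g) :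
    StrongConvexOn s (m + n) (f + g) :=
  (UniformConvexOn.add hf hg).mono fun r => le_of_eq <| by simp only [Pi.add_apply]; ring

lemma StrongConcaveOn.sub (hf : StrongConcaveOn s m f) (hg : StrongConvexOn s n g) :
    StrongConcaveOn s (m + n) (f - g) :=
  (UniformConcaveOn.sub hf hg).mono fun r => le_of_eq <| by simp only [Pi.add_apply]; ring

lemma StrongConvexOn.add_const (hf : StrongConvexOn s m f) (c : ℝ) :
    StrongConvexOn s m (f + fun _ => c) :=
  (UniformConvexOn.add hf (uniformConvexOn_zero.2 (convexOn_const c hf.1))).mono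
    fun r => by simp

lemma StrongConcaveOn.add_const (hf : StrongConcaveOn s m f) (c : ℝ) :
    StrongConcaveOn s m (f + fun _ => c) :=
  (UniformConcaveOn.add hf (uniformConcaveOn_zero.2 (concaveOn_const c hf.1))).mono
    fun r => by simp

lemma strongConvexOn_half_mul_sq_norm_sub (hs : Convex ℝ s) (m : ℝ) (c : E) :
    StrongConvexOn s m fun x => m / 2 * ‖x - c‖ ^ 2 := by
  refine ⟨hs, fun u _ v _ a b _ _ hab => le_of_eq ?_⟩
  obtain rfl : b = 1 - a := by linarith
  have hc : a • u + (1 - a) • v - c = a • (u - c) + (1 - a) • (v - c) := by module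
  have huv : u - v = (u - c) - (v - c) := by abel
  simp only [smul_eq_mul]
  rw [hc, huv, norm_add_sq_real, norm_sub_sq_real (u - c) (v - c), real_inner_smul_left,
    real_inner_smul_right, norm_smul, norm_smul, Real.norm_eq_abs, Real.norm_eq_abs, mul_pow,
    mul_pow, sq_abs, sq_abs]
  ring

lemma StrongConvexOn.add_half_mul_sq_norm_sub_le_of_isMinOn (hf : StrongConvexOn s m f)
    (hmin : IsMinOn f s v) (hu : u ∈ s) (hv : v ∈ s) :
    f v + m / 2 * ‖u - v‖ ^ 2 ≤ f u := by
  -- compare `f v` with `f (t • u + (1 - t) • v)` and let `t → 0⁺`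
  have hbound : ∀ t ∈ Ioo (0 : ℝ) 1, f v ≤ f u - (1 - t) * (m / 2 * ‖u - v‖ ^ 2) := by
    rintro t ⟨ht0, ht1⟩
    have hcomb := hf.2 hu hv ht0.le (sub_nonneg.2 ht1.le) (add_sub_cancel t 1)
    have hmin_t := isMinOn_iff.1 hmin _
      (hf.1 hu hv ht0.le (sub_nonneg.2 ht1.le) (add_sub_cancel t 1))
    simp only [smul_eq_mul] at hcomb hmin_t
    refine le_of_mul_le_mul_left ?_ ht0
    linarith
  have hcont : Continuous fun t : ℝ => f u - (1 - t) * (m / 2 * ‖u - v‖ ^ 2) := by fun_prop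
  have := ge_of_tendsto ((hcont.tendsto 0).mono_left nhdsWithin_le_nhds)
    (eventually_of_mem (Ioo_mem_nhdsGT one_pos) hbound)
  linarith

lemma StrongConcaveOn.add_half_mul_sq_norm_sub_le_of_isMaxOn (hf : StrongConcaveOn s m f)
    (hmax : IsMaxOn f s v) (hu : u ∈ s) (hv : v ∈ s) :
    f u + m / 2 * ‖u - v‖ ^ 2 ≤ f v := by
  have := StrongConvexOn.add_half_mul_sq_norm_sub_le_of_isMinOn (f := -f) hf.neg hmax.neg hu hv
  simp only [Pi.neg_apply] at this
  linarith

end StrongConvexity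

lemma IsSaddlePointOn.add_half_mul_sq_norm_sub_le {E F : Type*} [NormedAddCommGroup E]
    [InnerProductSpace ℝ E] [NormedAddCommGroup F] [InnerProductSpace ℝ F] {X : Set E}
    {Y : Set F} {h : E → F → ℝ} {a x : E} {b y : F} {m n : ℝ}
    (hs : IsSaddlePointOn X Y h a b) (hconv : StrongConvexOn X m fun x => h x b)
    (hconc : StrongConcaveOn Y n (h a)) (ha : a ∈ X) (hb : b ∈ Y) (hx : x ∈ X) (hy : y ∈ Y) :
    h a y + m / 2 * ‖x - a‖ ^ 2 + n / 2 * ‖y - b‖ ^ 2 ≤ h x b := by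
  have hgrow_x := hconv.add_half_mul_sq_norm_sub_le_of_isMinOn
    (isMinOn_iff.2 fun x' hx' => hs x' hx' b hb) hx ha
  have hgrow_y := hconc.add_half_mul_sq_norm_sub_le_of_isMaxOn
    (isMaxOn_iff.2 fun y' hy' => hs a ha y' hy') hy hb
  linarith

lemma two_mul_real_inner_sub_sub {E : Type*} [NormedAddCommGroup E] [InnerProductSpace ℝ E]
    (a b c d : E) :
    2 * ⟪b - a, c - d⟫_ℝ = ‖a - c‖ ^ 2 - ‖b - c‖ ^ 2 + ‖b - d‖ ^ 2 - ‖a - d‖ ^ 2 := by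
  simp only [norm_sub_sq_real, inner_sub_left, inner_sub_right]
  ring

lemma norm_le_div_mul_norm_of_mul_sq_le_inner {E : Type*} [NormedAddCommGroup E]
    [InnerProductSpace ℝ E] {w v : E} {c θ : ℝ} (hc : 0 < c) (hθ : 0 ≤ θ)
    (h : c * ‖w‖ ^ 2 ≤ θ * ⟪w, v⟫_ℝ) : ‖w‖ ≤ θ / c * ‖v‖ := by
  have hcs : c * ‖w‖ ^ 2 ≤ θ * ‖v‖ * ‖w‖ := by
    nlinarith [real_inner_le_norm w v]
  rw [div_mul_eq_mul_div, le_div_iff₀ hc]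
  rcases (norm_nonneg w).eq_or_lt with hw | hw
  · rw [← hw, zero_mul]; positivity
  · nlinarith

section Prox

variable {E F : Type*} [NormedAddCommGroup E] [NormedAddCommGroup F] {g : E → F → ℝ} {μ θ : ℝ}

variable (g θ) in
noncomputable def proxObjective (z : E × F) (x : E) (y : F) : ℝ :=
  g x y + θ / 2 * ‖x - z.1‖ ^ 2 - θ / 2 * ‖y - z.2‖ ^ 2

lemma strongConvexOn_proxObjective [InnerProductSpace ℝ E] {s : Set E} {y : F}
    (hg : StrongConvexOn s μ fun x => g x y) (z : E × F) :
    StrongConvexOn s (μ + θ) fun x => proxObjective g θ z x y := by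
  convert (hg.add (strongConvexOn_half_mul_sq_norm_sub hg.1 θ z.1)).add_const
    (-(θ / 2 * ‖y - z.2‖ ^ 2)) using 1
  funext x
  simp only [proxObjective, Pi.add_apply, sub_eq_add_neg]

lemma strongConcaveOn_proxObjective [InnerProductSpace ℝ F] {s : Set F} {x : E}
    (hg : StrongConcaveOn s μ fun y => g x y) (z : E × F) :
    StrongConcaveOn s (μ + θ) fun y => proxObjective g θ z x y := by
  convert (hg.sub (strongConvexOn_half_mul_sq_norm_sub hg.1 θ z.2)).add_const
    (θ / 2 * ‖x - z.1‖ ^ 2) using 1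
  funext y
  simp only [proxObjective, Pi.add_apply, Pi.sub_apply]
  ring

lemma mul_norm_sq_le_inner_of_isSaddlePointOn_proxObjective
    [InnerProductSpace ℝ E] [InnerProductSpace ℝ F]
    (hconv : ∀ y, StrongConvexOn univ μ fun x => g x y)
    (hconc : ∀ x, StrongConcaveOn univ μ fun y => g x y) {z₁ z₂ p₁ p₂ : E × F}
    (h₁ : IsSaddlePointOn univ univ (proxObjective g θ z₁) p₁.1 p₁.2)
    (h₂ : IsSaddlePointOn univ univ (proxObjective g θ z₂) p₂.1 p₂.2) :
    (μ + θ) * ‖WithLp.toLp 2 (p₁ - p₂)‖ ^ 2 ≤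
      θ * ⟪WithLp.toLp 2 (p₁ - p₂), WithLp.toLp 2 (z₁ - z₂)⟫_ℝ := by
  have e₁ := h₁.add_half_mul_sq_norm_sub_le (strongConvexOn_proxObjective (hconv _) z₁)
    (strongConcaveOn_proxObjective (hconc _) z₁) (mem_univ _) (mem_univ _)
    (mem_univ p₂.1) (mem_univ p₂.2)
  have e₂ := h₂.add_half_mul_sq_norm_sub_le (strongConvexOn_proxObjective (hconv _) z₂)
    (strongConcaveOn_proxObjective (hconc _) z₂) (mem_univ _) (mem_univ _)
    (mem_univ p₁.1) (mem_univ p₁.2)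
  have ix := two_mul_real_inner_sub_sub p₂.1 p₁.1 z₁.1 z₂.1
  have iy := two_mul_real_inner_sub_sub p₂.2 p₁.2 z₁.2 z₂.2
  rw [WithLp.prod_norm_sq_eq_of_L2, WithLp.prod_inner_apply]
  simp only [proxObjective] at e₁ e₂
  simp only [WithLp.toLp_fst, WithLp.toLp_snd, Prod.fst_sub, Prod.snd_sub]
  rw [norm_sub_rev p₂.1 p₁.1, norm_sub_rev p₂.2 p₁.2] at e₁
  linear_combination e₁ + e₂ - θ / 2 * ix - θ / 2 * iy

end Prox

/-- Prox contraction for strongly convex-concave functions: if `g` is `μ`-strongly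
convex-concave (`μ > 0`) and, for each `z' = (x',y')`, `P z'` is a saddle point of
`(x,y) ↦ g(x,y) + (θ/2)‖x-x'‖² - (θ/2)‖y-y'‖²` (i.e. `P = prox_{(1/θ)g}`), then `P` is a
contraction with factor `1 - μ/(θ+μ)` (in the `ℓ₂` product norm). -/
theorem prox_strongly_convex_concave_contraction
    {E F : Type*} [NormedAddCommGroup E] [InnerProductSpace ℝ E]
    [NormedAddCommGroup F] [InnerProductSpace ℝ F]
    (g : E → F → ℝ) (μ θ : ℝ) (hμ : 0 < μ) (hθ : 0 < θ)
    (hconv : ∀ y : F, StrongConvexOn univ μ (fun x => g x y))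
    (hconc : ∀ x : E, StrongConcaveOn univ μ (fun y => g x y))
    (P : E × F → E × F)
    (hsaddle : ∀ z' : E × F, ∀ (x : E) (y : F),
      g (P z').1 y + θ / 2 * ‖(P z').1 - z'.1‖ ^ 2 - θ / 2 * ‖y - z'.2‖ ^ 2 ≤
        g (P z').1 (P z').2 + θ / 2 * ‖(P z').1 - z'.1‖ ^ 2 - θ / 2 * ‖(P z').2 - z'.2‖ ^ 2 ∧
      g (P z').1 (P z').2 + θ / 2 * ‖(P z').1 - z'.1‖ ^ 2 - θ / 2 * ‖(P z').2 - z'.2‖ ^ 2 ≤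
        g x (P z').2 + θ / 2 * ‖x - z'.1‖ ^ 2 - θ / 2 * ‖(P z').2 - z'.2‖ ^ 2) :
    ∀ z₁ z₂ : E × F,
      Real.sqrt (‖(P z₁).1 - (P z₂).1‖ ^ 2 + ‖(P z₁).2 - (P z₂).2‖ ^ 2) ≤
        (1 - μ / (θ + μ)) * Real.sqrt (‖z₁.1 - z₂.1‖ ^ 2 + ‖z₁.2 - z₂.2‖ ^ 2) := by
  intro z₁ z₂
  have hP : ∀ z, IsSaddlePointOn univ univ (proxObjective g θ z) (P z).1 (P z).2 :=
    fun z x _ y _ => (hsaddle z x y).1.trans (hsaddle z x y).2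
  have hlip := norm_le_div_mul_norm_of_mul_sq_le_inner (by linarith) hθ.le
    (mul_norm_sq_le_inner_of_isSaddlePointOn_proxObjective hconv hconc (hP z₁) (hP z₂))
  have hfactor : 1 - μ / (θ + μ) = θ / (μ + θ) := by
    field_simp
    ring
  rw [WithLp.prod_norm_eq_of_L2, WithLp.prod_norm_eq_of_L2] at hlip
  simpa [hfactor] using hlip
end

section
/- Weighted geometric decay sum: for p ∈ (0,1], γμ ≤ p/2, and w_k = (1 - γμ/8)^{1-k}, one has ∑_{k=0}^K w_k (1-p)^k ≤ (8+p)/(4p). -/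
open Finset

/-! Writing `a = 1 - γμ/8`, the `k`-th term is `a · ((1 - p)/a)^k ≤ ((1 - p)/a)^k`, and
`γμ ≤ p/2` gives `(1 - p)/a ≤ 1 - p/2`. The sum is therefore dominated by the geometric series
of ratio `1 - p/2`, whose value `2/p` is below `(8 + p)/(4p)`. -/

section

variable {K : Type*} [Field K] [LinearOrder K] [IsStrictOrderedRing K]

theorem zpow_one_sub_mul_pow_le_pow {a b r : K} (ha0 : 0 < a) (ha1 : a ≤ 1) (hb : 0 ≤ b)
    (hbr : b ≤ a * r) (k : ℕ) : a ^ (1 - (k : ℤ)) * b ^ k ≤ r ^ k := by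
  have hba : b / a ≤ r := (div_le_iff₀' ha0).2 hbr
  calc a ^ (1 - (k : ℤ)) * b ^ k = a * (b / a) ^ k := by
        rw [zpow_sub₀ ha0.ne', zpow_one, zpow_natCast, div_pow]; ring
    _ ≤ (b / a) ^ k := mul_le_of_le_one_left (by positivity) ha1
    _ ≤ r ^ k := by gcongr

theorem sum_range_pow_le_inv_one_sub {x : K} (hx0 : 0 ≤ x) (hx1 : x < 1) (n : ℕ) :
    ∑ i ∈ range n, x ^ i ≤ (1 - x)⁻¹ := by
  simpa only [range_eq_Ico, pow_zero, one_div] using geom_sum_Ico_le_of_lt_one (m := 0) hx0 hx1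

end

/-- Weighted geometric decay sum: for `p ∈ (0,1]`, `γμ ≤ p/2`, and `w_k = (1 - γμ/8)^{1-k}`,
one has `∑_{k=0}^K w_k (1-p)^k ≤ (8+p)/(4p)`. -/
theorem weighted_geometric_decay_sum
    (p γ μ : ℝ) (hp0 : 0 < p) (hp1 : p ≤ 1) (hγ : 0 < γ) (hμ : 0 < μ)
    (hstep : γ * μ ≤ p / 2) (K : ℕ) :
    ∑ k ∈ range (K + 1), (1 - γ * μ / 8) ^ (1 - (k : ℤ)) * (1 - p) ^ k ≤ (8 + p) / (4 * p) := by
  have hγμ : 0 < γ * μ := mul_pos hγ hμ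
  have ha0 : 0 < 1 - γ * μ / 8 := by linarith
  have ha1 : 1 - γ * μ / 8 ≤ 1 := by linarith
  have hratio : 1 - p ≤ (1 - γ * μ / 8) * (1 - p / 2) := by nlinarith
  calc ∑ k ∈ range (K + 1), (1 - γ * μ / 8) ^ (1 - (k : ℤ)) * (1 - p) ^ k
      ≤ ∑ k ∈ range (K + 1), (1 - p / 2) ^ k :=
        sum_le_sum fun k _ => zpow_one_sub_mul_pow_le_pow ha0 ha1 (by linarith) hratio k
    _ ≤ (1 - (1 - p / 2))⁻¹ := sum_range_pow_le_inv_one_sub (by linarith) (by linarith) _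
    _ ≤ (8 + p) / (4 * p) := by
        rw [sub_sub_cancel, inv_div, div_le_div_iff₀ hp0 (by positivity)]
        nlinarith
end
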